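/- Let θ be an infinite cardinal with cf(2^θ) = θ⁺, and let λ be a cardinal with θ < λ < 2^θ. Then for any family F of at most 2^θ graphs, each of cardinality λ, there exists a graph of cardinality λ (indeed, an incidence graph Γ_A for some set A of subsets of θ with |A| = λ) that does not embed as an induced subgraph into any member of F. -/

import Mathlib

universe u

open Cardinal

/-- The incidence graph `Γ_A` of a family `A` of subsets of `Θ`: the bipartite graph
with left side `Θ`, right side `A`, and an edge between `z : Θ` and `x ∈ A` iff `z ∈ x`. -/
def incidenceGraph (Θ : Type u) (A : Set (Set Θ)) : SimpleGraph (Θ ⊕ ↥A) :=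
  SimpleGraph.fromRel fun v w =>
    match v, w with
    | Sum.inl z, Sum.inr x => z ∈ (x : Set Θ)
    | _, _ => False

/-!
An embedding `f` of `Γ_A` into a graph `G` with vertex set `V` restricts to some `g : θ → V`,
and every `x ∈ A` is the pullback `g⁻¹ (N (f x))` of a neighbourhood; so `A` lies in one of at
most `2^θ` families `F (G, g)` of at most `λ` subsets of `θ`. Enumerate these families along
`2^θ`, and for each point of a cofinal set of size `cf(2^θ) = θ⁺ ≤ λ` choose a subset of `θ`
outside the fewer than `2^θ` families enumerated below it. No family contains all the chosen
sets, and padding them to size `λ` gives `A`.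
-/

open Ordinal Set

theorem mk_Iic_lt {α : Type u} [LinearOrder α] [WellFoundedLT α] (hα : ℵ₀ ≤ #α)
    (h : (#α).ord = typeLT α) (i : α) : #(Iic i) < #α :=
  calc #(Iic i) = #(insert i (Iio i) : Set α) := by rw [Iio_insert]
    _ ≤ #(Iio i) + 1 := mk_insert_le
    _ < #α := add_lt_of_lt hα (mk_Iio_lt i h) (one_lt_aleph0.trans_le hα)

theorem exists_cof_cover_mk_lt_of_mk_le {J : Type u} {κ : Cardinal.{u}} (hκ : ℵ₀ ≤ κ)
    (hJ : #J ≤ κ) :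
    ∃ (S : Type u) (P : S → Set J), #S = κ.ord.cof ∧ (∀ j, ∃ s, j ∈ P s) ∧ ∀ s, #(P s) < κ := by
  obtain ⟨e⟩ : Nonempty (J ↪ κ.ord.ToType) := by rwa [← le_def, mk_ord_toType]
  obtain ⟨S, hS, hScard⟩ := Order.exists_cof_eq κ.ord.ToType
  refine ⟨S, fun s => e ⁻¹' Iic s.1, by rwa [cof_toType] at hScard, fun j => ?_, fun s => ?_⟩
  · obtain ⟨s, hs, hjs⟩ := hS (e j)
    exact ⟨⟨s, hs⟩, hjs⟩
  · have hIic := mk_Iic_lt (by rwa [mk_ord_toType]) (by rw [mk_ord_toType, type_toType]) s.1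
    exact (mk_preimage_of_injective _ _ e.injective).trans_lt (by rwa [mk_ord_toType] at hIic)

theorem exists_mk_le_cof_forall_not_subset {X J : Type u} (hX : ℵ₀ ≤ #X) (hJ : #J ≤ #X)
    (F : J → Set X) {μ : Cardinal.{u}} (hF : ∀ j, #(F j) ≤ μ) (hμ : μ < #X) :
    ∃ D : Set X, #D ≤ (#X).ord.cof ∧ ∀ j, ¬ D ⊆ F j := by
  obtain ⟨S, P, hScard, hP, hPsmall⟩ := exists_cof_cover_mk_lt_of_mk_le hX hJ
  have hsmall (s : S) : #(⋃ j : P s, F j) < #X :=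
    calc #(⋃ j : P s, F j) ≤ #(P s) * ⨆ j : P s, #(F j) := mk_iUnion_le _
      _ ≤ #(P s) * μ := by gcongr; exact ciSup_le' fun j => hF j
      _ < #X := mul_lt_of_lt hX (hPsmall s) hμ
  have hdiag (s : S) : ∃ x, x ∉ ⋃ j : P s, F j := by
    by_contra! h
    simpa [eq_univ_of_forall h] using hsmall s
  choose x hx using hdiag
  refine ⟨range x, hScard ▸ mk_range_le, fun j hj => ?_⟩
  obtain ⟨s, hjs⟩ := hP j
  exact hx s (mem_iUnion.2 ⟨⟨j, hjs⟩, hj (mem_range_self s)⟩)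

theorem exists_superset_mk_eq {X : Type u} {D : Set X} {μ : Cardinal.{u}} (hμ : ℵ₀ ≤ μ)
    (hD : #D ≤ μ) (hμX : μ ≤ #X) : ∃ A : Set X, D ⊆ A ∧ #A = μ := by
  obtain ⟨W, hW⟩ := le_mk_iff_exists_set.1 hμX
  refine ⟨D ∪ W, subset_union_left, le_antisymm ?_ (hW ▸ mk_le_mk_of_subset subset_union_right)⟩
  calc #(D ∪ W : Set X) ≤ #D + #W := mk_union_le _ _
    _ ≤ μ + μ := add_le_add hD hW.le
    _ = μ := add_eq_self hμ

theorem exists_mk_eq_forall_not_subset {X J : Type u} (hX : ℵ₀ ≤ #X) (hJ : #J ≤ #X)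
    (F : J → Set X) {μ : Cardinal.{u}} (hF : ∀ j, #(F j) ≤ μ) (hμ : μ < #X)
    (hcof : (#X).ord.cof ≤ μ) : ∃ A : Set X, #A = μ ∧ ∀ j, ¬ A ⊆ F j := by
  obtain ⟨D, hDcard, hD⟩ := exists_mk_le_cof_forall_not_subset hX hJ F hF hμ
  have hμ_inf : ℵ₀ ≤ μ := (aleph0_le_cof_iff.2 (one_lt_cof_iff.2 (isSuccLimit_ord hX))).trans hcof
  obtain ⟨A, hDA, hA⟩ := exists_superset_mk_eq hμ_inf (hDcard.trans hcof) hμ.le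
  exact ⟨A, hA, fun j hAj => hD j (hDA.trans hAj)⟩

theorem incidenceGraph_adj_inl_inr {Θ : Type u} {A : Set (Set Θ)} {z : Θ} {x : A} :
    (incidenceGraph Θ A).Adj (Sum.inl z) (Sum.inr x) ↔ z ∈ (x : Set Θ) := by
  simp [incidenceGraph]

theorem subset_range_preimage_neighborSet {Θ W : Type u} {A : Set (Set Θ)}
    {G : SimpleGraph W} (f : incidenceGraph Θ A ↪g G) :
    A ⊆ range fun w => (f ∘ Sum.inl) ⁻¹' G.neighborSet w := by
  intro x hx
  refine ⟨f (Sum.inr ⟨x, hx⟩), ?_⟩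
  ext z
  simp [G.adj_comm, incidenceGraph_adj_inl_inr]

theorem mk_sigma_arrow_le_two_power {θ : Cardinal.{u}} (hθ : ℵ₀ ≤ θ) {ι : Type u}
    {V : ι → Type u} (hι : #ι ≤ 2 ^ θ) (hV : ∀ i, #(V i) ≤ 2 ^ θ) :
    #(Σ i, θ.out → V i) ≤ 2 ^ θ :=
  calc #(Σ i, θ.out → V i) = sum fun i => #(V i) ^ θ := by simp [mk_sigma]
    _ ≤ sum fun _ : ι => (2 ^ θ) ^ θ := sum_le_sum _ _ fun i => power_le_power_right (hV i)
    _ = #ι * 2 ^ θ := by rw [sum_const', ← power_mul, mul_eq_self hθ]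
    _ ≤ 2 ^ θ * 2 ^ θ := mul_le_mul_left hι _
    _ = 2 ^ θ := mul_eq_self ((cantor θ).le.trans' hθ)

/-- If `θ` is infinite, `cf(2^θ) = θ⁺`, and `θ < λ < 2^θ`, then for every family of
at most `2^θ` graphs of cardinality `λ` there is an incidence graph `Γ_A`, with
`A ⊆ 𝒫(θ)` of cardinality `λ`, embedding (as an induced subgraph) into no member of
the family. -/
theorem stmt14 (θ lam : Cardinal.{u}) (hθ : ℵ₀ ≤ θ)
    (hcf : ((2 : Cardinal.{u}) ^ θ).ord.cof = Order.succ θ)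
    (hθlam : θ < lam) (hlt : lam < 2 ^ θ)
    (ι : Type u) (V : ι → Type u) (G : ∀ i, SimpleGraph (V i))
    (hι : #ι ≤ 2 ^ θ) (hV : ∀ i, #(V i) = lam) :
    ∃ A : Set (Set θ.out), #A = lam ∧
      ∀ i, IsEmpty (incidenceGraph θ.out A ↪g G i) := by
  have hX : #(Set θ.out) = 2 ^ θ := by rw [mk_set, mk_out]
  let F (j : Σ i, θ.out → V i) : Set (Set θ.out) :=
    range fun v => j.2 ⁻¹' (G j.1).neighborSet v
  obtain ⟨A, hA, hAF⟩ := exists_mk_eq_forall_not_subset (F := F)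
    (hX ▸ (cantor θ).le.trans' hθ)
    (hX ▸ mk_sigma_arrow_le_two_power hθ hι fun i => (hV i).trans_le hlt.le)
    (fun j => mk_range_le.trans (hV j.1).le) (hX ▸ hlt)
    (hX ▸ hcf ▸ Order.succ_le_of_lt hθlam)
  exact ⟨A, hA, fun i => ⟨fun f => hAF ⟨i, f ∘ Sum.inl⟩ (subset_range_preimage_neighborSet f)⟩⟩
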